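/- Every nontrivial element of the group Γ = ⟨α,β,γ⟩ ≅ (ℤ/2)³ other than α, β, γ themselves (i.e. αβ, αγ, βγ, αβγ) acts freely on 𝕋⁷. -/

import Mathlib

/-!
On one coordinate each composite is `x ↦ -(-x + 1/2)`, the translation by `1/2` on the circle,
which has no fixed point since `1/2 ≠ 0` in `ℝ/ℤ`.
-/

/-- The circle `ℝ/ℤ`. -/
abbrev Circ := AddCircle (1 : ℝ)

/-- The 7-torus `𝕋⁷ = ℝ⁷/ℤ⁷`. -/
abbrev T7 := Fin 7 → Circ

noncomputable def half : Circ := ((1/2 : ℝ) : Circ)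

/-- The involution `α(x) = (x₁,x₂,x₃,-x₄,-x₅,-x₆,-x₇)`. -/
noncomputable def tα (x : T7) : T7 := ![x 0, x 1, x 2, -x 3, -x 4, -x 5, -x 6]

/-- The involution `β(x) = (x₁,-x₂,-x₃,x₄,x₅,-x₆+1/2,-x₇)`. -/
noncomputable def tβ (x : T7) : T7 := ![x 0, -x 1, -x 2, x 3, x 4, -x 5 + half, -x 6]

/-- The involution `γ(x) = (-x₁,x₂,-x₃,x₄,-x₅+1/2,x₆,-x₇+1/2)`. -/
noncomputable def tγ (x : T7) : T7 := ![-x 0, x 1, -x 2, x 3, -x 4 + half, x 5, -x 6 + half]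

lemma half_ne_zero : half ≠ 0 := by
  have h_mem : (1 / 2 : ℝ) ∈ Set.Ico 0 1 := by norm_num
  rw [half, Ne, AddCircle.coe_eq_zero_iff_of_mem_Ico h_mem]
  norm_num

lemma neg_neg_add_ne_self {G : Type*} [AddGroup G] {c : G} (hc : c ≠ 0) (a : G) :
    -(-a + c) ≠ a := by
  simpa only [neg_add_rev, neg_neg, Ne, add_eq_right, neg_eq_zero] using hc

/-- Every nontrivial element of `Γ = ⟨α,β,γ⟩ ≅ (ℤ/2)³` other than `α, β, γ`
themselves, i.e. `αβ`, `αγ`, `βγ` and `αβγ`, acts freely on `𝕋⁷`. -/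
theorem composites_act_freely :
    (∀ x : T7, tα (tβ x) ≠ x) ∧
    (∀ x : T7, tα (tγ x) ≠ x) ∧
    (∀ x : T7, tβ (tγ x) ≠ x) ∧
    (∀ x : T7, tα (tβ (tγ x)) ≠ x) :=
  ⟨fun x h => neg_neg_add_ne_self half_ne_zero (x 5) (congrFun h 5),
   fun x h => neg_neg_add_ne_self half_ne_zero (x 4) (congrFun h 4),
   fun x h => neg_neg_add_ne_self half_ne_zero (x 6) (congrFun h 6),
   fun x h => neg_neg_add_ne_self half_ne_zero (x 5) (congrFun h 5)⟩
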